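/- Let κ ∈ C_{-1}(0,∞) be represented as κ(t) = h_p(t) κ_1(t) with p > 0 and κ_1 continuous on [0,∞), and let (a_j)_{j≥0} be complex numbers such that the power series Σ_{j=0}^∞ a_j z^j has a non-zero radius of convergence. Then the convolution series Σ_κ(t) = Σ_{j=0}^∞ a_j κ^{<j+1>}(t) converges for every t > 0 and defines a function in C_{-1}(0,∞); moreover, with α = min{p, 1}, the series Σ_{j=0}^∞ a_j t^{1−α} κ^{<j+1>}(t) converges uniformly on [0, T] for every T > 0. -/

import Mathlib

noncomputable section

/-- Laplace convolution of complex-valued functions on `(0,∞)`. -/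
def convC (f g : ℝ → ℂ) : ℝ → ℂ := fun t => ∫ τ in (0:ℝ)..t, f (t - τ) * g τ

/-- The space `C_{-1}(0,∞)` of complex-valued functions: `f(t) = t^q f₁(t)` with
`q > -1` and `f₁` continuous on `[0,∞)`. -/
def Cm1C (f : ℝ → ℂ) : Prop :=
  ∃ q : ℝ, -1 < q ∧ ∃ f₁ : ℝ → ℂ, ContinuousOn f₁ (Set.Ici 0) ∧
    ∀ t : ℝ, 0 < t → f t = ((t ^ q : ℝ) : ℂ) * f₁ t

/-- Convolution powers: `g^{<1>} = g`, `g^{<j+1>} = g * g^{<j>}` (and `g^{<0>} = 1`). -/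
def convPowC (g : ℝ → ℂ) : ℕ → ℝ → ℂ
  | 0 => fun _ => 1
  | 1 => g
  | (j + 2) => convC g (convPowC g (j + 1))

/-- `h_p(t) = t^(p-1)/Γ(p)` as a complex-valued function. -/
def hkerC (p : ℝ) : ℝ → ℂ := fun t => ((t ^ (p - 1) / Real.Gamma p : ℝ) : ℂ)

/-!
Write `κ t = t ^ (p - 1) u t` with `u` continuous on `[0, ∞)`. Substituting `τ = t σ` in each
convolution gives `κ^{<j+1>} t = t ^ ((j + 1) p - 1) V_j t`, where `V_j` is continuous on `[0, ∞)`
and `|V_j| ≤ M ^ (j + 1) ∏_{i < j} B((i + 1) p, p)` on `[0, T]`, `M` bounding `|u|` there. The Beta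
values `B(a, p)` tend to `0` as `a → ∞`, so these products beat every geometric sequence, and the
Weierstrass M-test makes `∑ a_j (t ^ p) ^ j V_j t` converge uniformly on `[0, T]`. Its sum `f₁` is
continuous and `Σ_κ t = t ^ (p - 1) f₁ t`; after multiplying by `t ^ (1 - α)` the prefactor becomes
`t ^ (p - α)`, which is bounded on `[0, T]`.
-/

open MeasureTheory Set Filter Topology Finset
open scoped Interval

def betaIntegrand (a b σ : ℝ) : ℝ := σ ^ (a - 1) * (1 - σ) ^ (b - 1)

def realBetaIntegral (a b : ℝ) : ℝ := ∫ σ in (0:ℝ)..1, betaIntegrand a b σ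

section Beta

variable {a a' b σ : ℝ}

lemma betaIntegrand_nonneg (hσ : σ ∈ Icc (0:ℝ) 1) : 0 ≤ betaIntegrand a b σ :=
  mul_nonneg (Real.rpow_nonneg hσ.1 _) (Real.rpow_nonneg (sub_nonneg.2 hσ.2) _)

lemma betaIntegrand_le_of_le (hσ : σ ∈ Ioc (0:ℝ) 1) (h : a' ≤ a) :
    betaIntegrand a b σ ≤ betaIntegrand a' b σ :=
  mul_le_mul_of_nonneg_right (Real.rpow_le_rpow_of_exponent_ge hσ.1 hσ.2 (by linarith))
    (Real.rpow_nonneg (sub_nonneg.2 hσ.2) _)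

lemma intervalIntegrable_betaIntegrand (ha : 0 < a) (hb : 0 < b) :
    IntervalIntegrable (betaIntegrand a b) volume 0 1 := by
  refine (Complex.betaIntegral_convergent (u := a) (v := b) (by simpa) (by simpa)).norm.congr_uIoo
    fun σ hσ => ?_
  rw [uIoo_of_le zero_le_one] at hσ
  have h1σ : (1 : ℂ) - σ = ((1 - σ : ℝ) : ℂ) := by push_cast; rfl
  dsimp only
  rw [norm_mul, h1σ, Complex.norm_cpow_eq_rpow_re_of_pos hσ.1,
    Complex.norm_cpow_eq_rpow_re_of_pos (sub_pos.2 hσ.2)]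
  simp [betaIntegrand]

lemma tendsto_realBetaIntegral_atTop (hb : 0 < b) :
    Tendsto (fun a => realBetaIntegral a b) atTop (𝓝 0) := by
  have hlim : ∀ σ ∈ Ioo (0:ℝ) 1, Tendsto (fun a => betaIntegrand a b σ) atTop (𝓝 0) := by
    intro σ hσ
    simpa [betaIntegrand, sub_eq_add_neg] using
      ((tendsto_rpow_atTop_of_base_lt_one σ (by linarith [hσ.1]) hσ.2).comp
        (tendsto_atTop_add_const_right _ (-1) tendsto_id)).mul_const ((1 - σ) ^ (b - 1))
  have hdom : ∀ᶠ a in atTop, ∀ σ ∈ Ι (0:ℝ) 1, ‖betaIntegrand a b σ‖ ≤ betaIntegrand 1 b σ := by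
    filter_upwards [eventually_ge_atTop 1] with a ha σ hσ
    rw [uIoc_of_le zero_le_one] at hσ
    rw [Real.norm_of_nonneg (betaIntegrand_nonneg (Ioc_subset_Icc_self hσ))]
    exact betaIntegrand_le_of_le hσ ha
  simpa [realBetaIntegral] using
    intervalIntegral.tendsto_integral_filter_of_dominated_convergence (f := fun _ => (0:ℝ)) _
    (by filter_upwards [eventually_gt_atTop (0:ℝ)] with a ha using
      (intervalIntegrable_betaIntegrand ha hb).def'.aestronglyMeasurable)
    (by filter_upwards [hdom] with a ha using ae_of_all _ ha)
    (intervalIntegrable_betaIntegrand one_pos hb)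
    (by filter_upwards [volume.ae_ne 1] with σ hσ1 hσ
        rw [uIoc_of_le zero_le_one] at hσ
        exact hlim σ ⟨hσ.1, lt_of_le_of_ne hσ.2 hσ1⟩)

end Beta

lemma summable_pow_mul_prod_of_tendsto_zero {b : ℕ → ℝ} (hb : Tendsto b atTop (𝓝 0)) (x : ℝ) :
    Summable fun j => x ^ j * ∏ i ∈ range j, b i := by
  refine summable_of_ratio_norm_eventually_le (r := 1 / 2) (by norm_num) ?_
  have hsmall : ∀ᶠ j in atTop, ‖x * b j‖ ≤ 1 / 2 := by
    have hx := (hb.const_mul x).norm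
    rw [mul_zero, norm_zero] at hx
    exact hx.eventually (eventually_le_nhds (by norm_num))
  filter_upwards [hsmall] with j hj
  calc ‖x ^ (j + 1) * ∏ i ∈ range (j + 1), b i‖
      = ‖x * b j‖ * ‖x ^ j * ∏ i ∈ range j, b i‖ := by
        rw [← norm_mul, prod_range_succ, pow_succ]; ring_nf
    _ ≤ 1 / 2 * ‖x ^ j * ∏ i ∈ range j, b i‖ := by gcongr

lemma continuousOn_intervalIntegral_smul_of_isCompact {X E : Type*} [TopologicalSpace X]
    [FirstCountableTopology X] [NormedAddCommGroup E] [NormedSpace ℝ E] {K : Set X}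
    (hK : IsCompact K) {a b : ℝ} {w : ℝ → ℝ} (hw : IntervalIntegrable w volume a b)
    {g : X → ℝ → E} (hg : ContinuousOn (Function.uncurry g) (K ×ˢ uIcc a b)) :
    ContinuousOn (fun x => ∫ σ in a..b, w σ • g x σ) K := by
  obtain ⟨M, hM⟩ := (hK.prod isCompact_uIcc).exists_bound_of_continuousOn hg
  have hgσ : ∀ σ ∈ uIcc a b, ContinuousOn (fun x => g x σ) K := fun σ hσ =>
    hg.comp (continuousOn_id.prodMk continuousOn_const) fun x hx => ⟨hx, hσ⟩
  intro x₀ hx₀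
  refine intervalIntegral.continuousWithinAt_of_dominated_interval (bound := fun σ => ‖w σ‖ * M)
    ?_ ?_ (hw.norm.mul_const M) (ae_of_all _ fun σ hσ =>
      (hgσ σ (uIoc_subset_uIcc hσ) x₀ hx₀).const_smul (w σ))
  · refine eventually_nhdsWithin_of_forall fun x hx => hw.def'.aestronglyMeasurable.smul ?_
    exact (hg.comp (continuousOn_const.prodMk continuousOn_id) fun σ hσ =>
      ⟨hx, uIoc_subset_uIcc hσ⟩).aestronglyMeasurable measurableSet_uIoc
  · refine eventually_nhdsWithin_of_forall fun x hx => ae_of_all _ fun σ hσ => ?_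
    rw [norm_smul]
    exact mul_le_mul_of_nonneg_left (hM (x, σ) ⟨hx, uIoc_subset_uIcc hσ⟩) (norm_nonneg _)

lemma continuousOn_Ici_of_forall_Icc {E : Type*} [TopologicalSpace E] {f : ℝ → E} {a : ℝ}
    (h : ∀ T, ContinuousOn f (Icc a T)) : ContinuousOn f (Ici a) :=
  continuousOn_of_locally_continuousOn fun t _ =>
    ⟨Iio (t + 1), isOpen_Iio, by simp, (h (t + 1)).mono fun _ hs => ⟨hs.1, hs.2.le⟩⟩

/-- If `κ t = t ^ (p - 1) * u t`, the substitution `τ = t σ` in the convolution integral gives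
`κ^{<j+1>} t = t ^ ((j + 1) p - 1) * rescaledConvPow p u j t`; unlike `κ^{<j+1>}`, this factor is
continuous up to `t = 0`. -/
def rescaledConvPow (p : ℝ) (u : ℝ → ℂ) : ℕ → ℝ → ℂ
  | 0 => u
  | j + 1 => fun t => ∫ σ in (0:ℝ)..1,
      betaIntegrand ((j + 1) * p) p σ • (u (t * (1 - σ)) * rescaledConvPow p u j (t * σ))

section Rescaled

variable {p : ℝ} {u : ℝ → ℂ}

lemma continuousOn_rescaledConvPow (hp : 0 < p) (hu : ContinuousOn u (Ici 0)) (j : ℕ) :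
    ContinuousOn (rescaledConvPow p u j) (Ici 0) := by
  induction j with
  | zero => exact hu
  | succ j ih =>
    refine continuousOn_Ici_of_forall_Icc fun T => ?_
    refine continuousOn_intervalIntegral_smul_of_isCompact isCompact_Icc
      (intervalIntegrable_betaIntegrand (by positivity) hp) ?_
    rw [Set.uIcc_of_le zero_le_one]
    refine (hu.comp (by fun_prop) ?_).mul (ih.comp (by fun_prop) ?_) <;>
      rintro ⟨t, σ⟩ ⟨ht, hσ⟩
    · exact mul_nonneg ht.1 (sub_nonneg.2 hσ.2)
    · exact mul_nonneg ht.1 hσ.1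

lemma norm_rescaledConvPow_le (hp : 0 < p) {T M : ℝ} (hM : ∀ s ∈ Icc 0 T, ‖u s‖ ≤ M) (j : ℕ)
    {t : ℝ} (ht : t ∈ Icc 0 T) :
    ‖rescaledConvPow p u j t‖ ≤ M ^ (j + 1) * ∏ i ∈ range j, realBetaIntegral ((i + 1) * p) p := by
  induction j generalizing t with
  | zero => simpa [rescaledConvPow] using hM t ht
  | succ j ih =>
    have hM0 : 0 ≤ M := (norm_nonneg _).trans (hM 0 ⟨le_rfl, ht.1.trans ht.2⟩)
    have hscale : ∀ {c}, c ∈ Icc (0:ℝ) 1 → t * c ∈ Icc 0 T := fun hc =>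
      ⟨mul_nonneg ht.1 hc.1, (mul_le_of_le_one_right ht.1 hc.2).trans ht.2⟩
    calc ‖rescaledConvPow p u (j + 1) t‖
        ≤ ∫ σ in (0:ℝ)..1, betaIntegrand ((j + 1) * p) p σ *
            (M * (M ^ (j + 1) * ∏ i ∈ range j, realBetaIntegral ((i + 1) * p) p)) := by
          refine intervalIntegral.norm_integral_le_of_norm_le zero_le_one
            (ae_of_all _ fun σ hσ => ?_)
            ((intervalIntegrable_betaIntegrand (by positivity) hp).mul_const _)
          have hσ' := Ioc_subset_Icc_self hσ
          rw [norm_smul, norm_mul, Real.norm_of_nonneg (betaIntegrand_nonneg hσ')]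
          refine mul_le_mul_of_nonneg_left (mul_le_mul ?_ (ih (hscale hσ')) (norm_nonneg _) hM0)
            (betaIntegrand_nonneg hσ')
          exact hM _ (hscale ⟨sub_nonneg.2 hσ'.2, by linarith [hσ'.1]⟩)
      _ = M ^ (j + 1 + 1) * ∏ i ∈ range (j + 1), realBetaIntegral ((i + 1) * p) p := by
          rw [intervalIntegral.integral_mul_const, prod_range_succ, realBetaIntegral]
          ring

lemma mul_rpow_mul_rpow_eq_rpow_mul_betaIntegrand {t σ : ℝ} (ht : 0 < t)
    (hσ : σ ∈ Ioo (0:ℝ) 1) (p q : ℝ) :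
    t * ((t * (1 - σ)) ^ (p - 1) * (t * σ) ^ (q - 1)) = t ^ (q + p - 1) * betaIntegrand q p σ := by
  rw [Real.mul_rpow ht.le (sub_pos.2 hσ.2).le, Real.mul_rpow ht.le hσ.1.le, betaIntegrand,
    show q + p - 1 = 1 + (p - 1) + (q - 1) by ring, Real.rpow_add ht, Real.rpow_add ht,
    Real.rpow_one]
  ring

lemma convPowC_succ_eq_rpow_mul_rescaledConvPow {κ : ℝ → ℂ}
    (hκ : ∀ t, 0 < t → κ t = ((t ^ (p - 1) : ℝ) : ℂ) * u t) (j : ℕ) {t : ℝ} (ht : 0 < t) :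
    convPowC κ (j + 1) t = ((t ^ (((j : ℝ) + 1) * p - 1) : ℝ) : ℂ) * rescaledConvPow p u j t := by
  induction j generalizing t with
  | zero => simpa [convPowC, rescaledConvPow] using hκ t ht
  | succ j ih =>
    have hsubst : convPowC κ (j + 2) t
        = t • ∫ σ in (0:ℝ)..1, κ (t * (1 - σ)) * convPowC κ (j + 1) (t * σ) := by
      simp only [convPowC, convC, intervalIntegral.smul_integral_comp_mul_left
        (fun τ => κ (t - τ) * convPowC κ (j + 1) τ) t, mul_zero, mul_one, mul_one_sub]
    rw [hsubst, rescaledConvPow, ← intervalIntegral.integral_smul,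
      ← intervalIntegral.integral_const_mul]
    refine intervalIntegral.integral_congr_uIoo fun σ hσ => ?_
    rw [uIoo_of_le zero_le_one] at hσ
    have key := mul_rpow_mul_rpow_eq_rpow_mul_betaIntegrand ht hσ p (((j : ℝ) + 1) * p)
    rw [show ((j : ℝ) + 1) * p + p - 1 = ((j : ℝ) + 1 + 1) * p - 1 by ring] at key
    replace key := congrArg (fun x : ℝ => (x : ℂ)) key
    simp only [hκ _ (mul_pos ht (sub_pos.2 hσ.2)), ih (mul_pos ht hσ.1), Complex.real_smul]
    push_cast at key ⊢
    linear_combination (u (t * (1 - σ)) * rescaledConvPow p u j (t * σ)) * key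

end Rescaled

lemma convPowC_apply_zero_of_two_le (g : ℝ → ℂ) {j : ℕ} (hj : 2 ≤ j) : convPowC g j 0 = 0 := by
  obtain ⟨k, rfl⟩ := Nat.exists_eq_add_of_le' hj
  simp [convPowC, convC]

lemma rpow_succ_mul_sub_one {t : ℝ} (ht : 0 < t) (p : ℝ) (j : ℕ) :
    t ^ (((j : ℝ) + 1) * p - 1) = t ^ (p - 1) * (t ^ p) ^ j := by
  rw [← Real.rpow_natCast, ← Real.rpow_mul ht.le, ← Real.rpow_add ht]
  ring_nf

section Series

variable {p : ℝ} {u : ℝ → ℂ}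

lemma exists_summable_bound_rescaledConvPow (hp : 0 < p) (hu : ContinuousOn u (Ici 0))
    {a : ℕ → ℂ} (ha : ∃ r : ℝ, 0 < r ∧ ∃ C : ℝ, ∀ j, ‖a j‖ * r ^ j ≤ C) (T : ℝ) :
    ∃ w : ℕ → ℝ, Summable w ∧ ∀ j, ∀ t ∈ Icc 0 T,
      ‖a j * (((t ^ p) ^ j : ℝ) : ℂ) * rescaledConvPow p u j t‖ ≤ w j := by
  obtain ⟨r, hr, C, hC⟩ := ha
  obtain ⟨M, hM⟩ := isCompact_Icc.exists_bound_of_continuousOn (hu.mono Icc_subset_Ici_self)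
  have hC0 : 0 ≤ C := (by positivity : 0 ≤ ‖a 0‖ * r ^ 0).trans (hC 0)
  have hB : Tendsto (fun i : ℕ => realBetaIntegral ((i + 1) * p) p) atTop (𝓝 0) :=
    (tendsto_realBetaIntegral_atTop hp).comp
      ((tendsto_atTop_add_const_right _ 1 tendsto_natCast_atTop_atTop).atTop_mul_const hp)
  refine ⟨fun j => C * M * ((T ^ p * M / r) ^ j * ∏ i ∈ range j, realBetaIntegral ((i + 1) * p) p),
    (summable_pow_mul_prod_of_tendsto_zero hB _).mul_left _, fun j t ht => ?_⟩
  have htp : 0 ≤ t ^ p := Real.rpow_nonneg ht.1 p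
  calc ‖a j * (((t ^ p) ^ j : ℝ) : ℂ) * rescaledConvPow p u j t‖
      = ‖a j‖ * (t ^ p) ^ j * ‖rescaledConvPow p u j t‖ := by
        rw [norm_mul, norm_mul, Complex.norm_real, Real.norm_of_nonneg (by positivity)]
    _ ≤ C / r ^ j * (T ^ p) ^ j *
          (M ^ (j + 1) * ∏ i ∈ range j, realBetaIntegral ((i + 1) * p) p) := by
        have hTp : 0 ≤ T ^ p := Real.rpow_nonneg (ht.1.trans ht.2) p
        gcongr ?_ * ?_ ^ j * ?_
        · exact (le_div_iff₀ (pow_pos hr j)).2 (hC j)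
        · exact Real.rpow_le_rpow ht.1 ht.2 hp.le
        · exact norm_rescaledConvPow_le hp hM j ht
    _ = C * M * ((T ^ p * M / r) ^ j * ∏ i ∈ range j, realBetaIntegral ((i + 1) * p) p) := by
        ring

lemma continuousOn_tsum_rescaledConvPow (hp : 0 < p) (hu : ContinuousOn u (Ici 0))
    {a : ℕ → ℂ} (ha : ∃ r : ℝ, 0 < r ∧ ∃ C : ℝ, ∀ j, ‖a j‖ * r ^ j ≤ C) :
    ContinuousOn (fun t => ∑' j, a j * (((t ^ p) ^ j : ℝ) : ℂ) * rescaledConvPow p u j t)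
      (Ici 0) := by
  refine continuousOn_Ici_of_forall_Icc fun T => ?_
  obtain ⟨w, hw, hfw⟩ := exists_summable_bound_rescaledConvPow hp hu ha T
  refine continuousOn_tsum (fun j => ?_) hw hfw
  exact (continuousOn_const.mul (Complex.continuous_ofReal.comp
    ((Real.continuous_rpow_const hp.le).pow j)).continuousOn).mul
    ((continuousOn_rescaledConvPow hp hu j).mono Icc_subset_Ici_self)

variable {κ : ℝ → ℂ}

lemma mul_convPowC_succ_eq (hκ : ∀ t, 0 < t → κ t = ((t ^ (p - 1) : ℝ) : ℂ) * u t)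
    (c : ℂ) (j : ℕ) {t : ℝ} (ht : 0 < t) :
    c * convPowC κ (j + 1) t
      = ((t ^ (p - 1) : ℝ) : ℂ) * (c * (((t ^ p) ^ j : ℝ) : ℂ) * rescaledConvPow p u j t) := by
  rw [convPowC_succ_eq_rpow_mul_rescaledConvPow hκ j ht, rpow_succ_mul_sub_one ht]
  push_cast
  ring

lemma norm_mul_rpow_mul_convPowC_le (hκ : ∀ t, 0 < t → κ t = ((t ^ (p - 1) : ℝ) : ℂ) * u t)
    {α : ℝ} (hα : α ≤ p) (c : ℂ) {j : ℕ} (hj : 1 ≤ j)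
    {t T : ℝ} (ht : t ∈ Icc 0 T) :
    ‖c * ((t ^ (1 - α) : ℝ) : ℂ) * convPowC κ (j + 1) t‖
      ≤ T ^ (p - α) * ‖c * (((t ^ p) ^ j : ℝ) : ℂ) * rescaledConvPow p u j t‖ := by
  have hTα : 0 ≤ T ^ (p - α) := Real.rpow_nonneg (ht.1.trans ht.2) _
  rcases ht.1.eq_or_lt with rfl | htpos
  · rw [convPowC_apply_zero_of_two_le κ (by omega), mul_zero, norm_zero]
    positivity
  · have hsplit : c * ((t ^ (1 - α) : ℝ) : ℂ) * convPowC κ (j + 1) t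
        = ((t ^ (p - α) : ℝ) : ℂ) * (c * (((t ^ p) ^ j : ℝ) : ℂ) * rescaledConvPow p u j t) := by
      rw [mul_right_comm, mul_convPowC_succ_eq hκ _ j htpos,
        show p - α = p - 1 + (1 - α) by ring, Real.rpow_add htpos]
      push_cast
      ring
    rw [hsplit, norm_mul, Complex.norm_real, Real.norm_of_nonneg (Real.rpow_nonneg htpos.le _)]
    exact mul_le_mul_of_nonneg_right (Real.rpow_le_rpow htpos.le ht.2 (by linarith))
      (norm_nonneg _)

end Series

/-- if `κ(t) = h_p(t) κ₁(t)` with `p > 0`, `κ₁` continuous on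
`[0,∞)`, and the power series `Σ a_j z^j` has non-zero radius of convergence,
then the convolution series `Σ_{j≥0} a_j κ^{<j+1>}(t)` converges for every
`t > 0`, defines a function in `C_{-1}(0,∞)`, and, with `α = min{p,1}`, the
series `Σ_j a_j t^{1-α} κ^{<j+1>}(t)` converges uniformly on `[0,T]` for every
`T > 0`. -/
theorem convolution_series_converges (κ : ℝ → ℂ) (p : ℝ) (hp : 0 < p)
    (κ₁ : ℝ → ℂ) (hκ₁ : ContinuousOn κ₁ (Set.Ici 0))
    (hκ : ∀ t : ℝ, 0 < t → κ t = ((t ^ (p - 1) / Real.Gamma p : ℝ) : ℂ) * κ₁ t)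
    (a : ℕ → ℂ) (ha : ∃ r : ℝ, 0 < r ∧ ∃ C : ℝ, ∀ j : ℕ, ‖a j‖ * r ^ j ≤ C) :
    (∀ t : ℝ, 0 < t → Summable fun j : ℕ => a j * convPowC κ (j + 1) t) ∧
    Cm1C (fun t => ∑' j : ℕ, a j * convPowC κ (j + 1) t) ∧
    ∀ T : ℝ, 0 < T →
      TendstoUniformlyOn
        (fun N t => ∑ j ∈ Finset.range N,
          a j * ((t ^ (1 - min p 1) : ℝ) : ℂ) * convPowC κ (j + 1) t)
        (fun t => ∑' j : ℕ,
          a j * ((t ^ (1 - min p 1) : ℝ) : ℂ) * convPowC κ (j + 1) t)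
        Filter.atTop (Set.Icc 0 T) := by
  set u : ℝ → ℂ := fun t => (Real.Gamma p : ℂ)⁻¹ * κ₁ t
  have hu : ContinuousOn u (Ici 0) := continuousOn_const.mul hκ₁
  have hκu : ∀ t, 0 < t → κ t = ((t ^ (p - 1) : ℝ) : ℂ) * u t := fun t ht => by
    simp only [hκ t ht, u]
    push_cast
    ring
  have hbound := exists_summable_bound_rescaledConvPow hp hu ha
  refine ⟨fun t ht => ?_, ⟨p - 1, by linarith, _, continuousOn_tsum_rescaledConvPow hp hu ha,
    fun t ht => ?_⟩, fun T hT => ?_⟩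
  · obtain ⟨w, hw, hfw⟩ := hbound t
    simp_rw [mul_convPowC_succ_eq hκu _ _ ht]
    exact (hw.of_norm_bounded fun j => hfw j t ⟨ht.le, le_rfl⟩).mul_left _
  · simp only [mul_convPowC_succ_eq hκu _ _ ht, tsum_mul_left]
  · obtain ⟨w, hw, hfw⟩ := hbound T
    refine tendstoUniformlyOn_tsum_nat_eventually (hw.mul_left (T ^ (p - min p 1))) ?_
    -- only a tail bound: at `t = 0` the `j = 0` term involves the unconstrained value `κ 0`
    filter_upwards [eventually_ge_atTop 1] with j hj t ht
    exact (norm_mul_rpow_mul_convPowC_le hκu (min_le_left p 1) _ hj ht).trans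
      (mul_le_mul_of_nonneg_left (hfw j t ht) (Real.rpow_nonneg hT.le _))
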